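/- Let A be a residuated lattice, F a filter of A, and C a ∨-closed subset of A. Then ω_F(C) = ⋂{m | m is an F-minimal prime filter of A and m ∩ C = ∅} (where the intersection over the empty family is A). -/

import Mathlib

/-!
If `x ∨ a ∈ F` with `x ∈ C`, every prime filter containing `F` and missing `C` contains `a`.
Conversely, if `a ∉ ω_F(C)`, the `∨`-closed set `{x ∨ a | x ∈ C}` misses `F`; the prime filter
theorem for residuated lattices (a filter maximal among those missing a `∨`-closed set is prime)
extends `F` to a prime filter `P` missing it, and Zorn's lemma shrinks `P` to an `F`-minimal prime
filter `m ⊆ P`. Then `m` misses `C` and does not contain `a`.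
-/

class ResiduatedLattice (α : Type*) extends Lattice α, CommMonoid α, BoundedOrder α where
  rimp : α → α → α
  one_eq_top : (1 : α) = ⊤
  adjunction : ∀ x y z : α, x * y ≤ z ↔ x ≤ rimp y z

variable {α : Type*} [ResiduatedLattice α]

/-- A filter of a residuated lattice: nonempty, closed under `⊙` and upward closed. -/
def IsFilter (F : Set α) : Prop :=
  F.Nonempty ∧ (∀ x ∈ F, ∀ y ∈ F, x * y ∈ F) ∧ ∀ x ∈ F, ∀ y : α, x ≤ y → y ∈ F

/-- A prime filter: a proper filter such that `x ⊔ y ∈ P` implies `x ∈ P` or `y ∈ P`. -/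
def IsPrimeFilter (P : Set α) : Prop :=
  IsFilter P ∧ P ≠ Set.univ ∧ ∀ x y : α, x ⊔ y ∈ P → x ∈ P ∨ y ∈ P

/-- A `∨`-closed subset: nonempty and closed under join. -/
def IsJoinClosed (C : Set α) : Prop :=
  C.Nonempty ∧ ∀ x ∈ C, ∀ y ∈ C, x ⊔ y ∈ C

/-- The filter generated by a set. -/
def filterGen (X : Set α) : Set α := ⋂₀ {G : Set α | IsFilter G ∧ X ⊆ G}

/-- An `X`-minimal prime filter: prime, contains `X`, minimal among primes containing `X`. -/
def IsMinPrimeOver (X P : Set α) : Prop :=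
  IsPrimeFilter P ∧ X ⊆ P ∧ ∀ Q : Set α, IsPrimeFilter Q → X ⊆ Q → Q ⊆ P → Q = P

/-- `ω_F(X) = {a | x ∨ a ∈ F for some x ∈ X}`. -/
def omegaF (F X : Set α) : Set α := {a : α | ∃ x ∈ X, x ⊔ a ∈ F}

/-- The coannihilator `(F : x) = {a | x ∨ a ∈ F}`. -/
def coann (F : Set α) (x : α) : Set α := {a : α | x ⊔ a ∈ F}

/-- `D_F(H) = {a | x ∨ a ∈ F for some x ∉ H}`, the set of `F`-divisors of `H`. -/
def divisorsF (F H : Set α) : Set α := {a : α | ∃ x ∉ H, x ⊔ a ∈ F}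

/-- A lattice ideal: nonempty, closed under join and downward closed. -/
def IsLatticeIdeal (I : Set α) : Prop :=
  I.Nonempty ∧ (∀ x ∈ I, ∀ y ∈ I, x ⊔ y ∈ I) ∧ ∀ x y : α, x ≤ y → y ∈ I → x ∈ I

/-- The lattice ideal generated by a set. -/
def idealGen (X : Set α) : Set α := ⋂₀ {I : Set α | IsLatticeIdeal I ∧ X ⊆ I}

/-- An `ω_F`-filter: a filter of the form `ω_F(I)` for some lattice ideal `I`. -/
def IsOmegaFilter (F H : Set α) : Prop :=
  IsFilter H ∧ ∃ I : Set α, IsLatticeIdeal I ∧ H = omegaF F I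

namespace ResiduatedLattice

instance : IsOrderedMonoid α where
  mul_le_mul_left a b hab c :=
    (adjunction a c (b * c)).mpr (hab.trans ((adjunction b c (b * c)).mp le_rfl))

theorem le_one (x : α) : x ≤ 1 := one_eq_top (α := α) ▸ le_top

theorem mul_le_left (x y : α) : x * y ≤ x := mul_le_of_le_one_right' (le_one y)

theorem mul_le_right (x y : α) : x * y ≤ y := mul_le_of_le_one_left' (le_one x)

theorem mul_sup_eq (x y z : α) : x * (y ⊔ z) = x * y ⊔ x * z := by
  refine le_antisymm ?_ (sup_le (mul_le_mul_right le_sup_left x) (mul_le_mul_right le_sup_right x))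
  rw [mul_comm, adjunction]
  exact sup_le ((adjunction y x _).mp (mul_comm x y ▸ le_sup_left))
    ((adjunction z x _).mp (mul_comm x z ▸ le_sup_right))

theorem sup_mul_eq (x y z : α) : (x ⊔ y) * z = x * z ⊔ y * z := by
  simp only [mul_comm _ z, mul_sup_eq]

/-- A product of `n + m` factors from `{x, y}` has at least `n` factors `x` or `m` factors `y`. -/
theorem sup_pow_add_le (x y : α) : ∀ n m : ℕ, (x ⊔ y) ^ (n + m) ≤ x ^ n ⊔ y ^ m
  | 0, _ => by simp [one_eq_top]
  | _, 0 => by simp [one_eq_top]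
  | n + 1, m + 1 => by
    have hx := sup_pow_add_le x y n (m + 1)
    have hy := sup_pow_add_le x y (n + 1) m
    rw [show n + 1 + m = n + (m + 1) by omega] at hy
    rw [show n + 1 + (m + 1) = n + (m + 1) + 1 by omega, pow_succ, mul_sup_eq]
    refine sup_le ((mul_le_mul_left hx x).trans ?_) ((mul_le_mul_left hy y).trans ?_)
    · rw [sup_mul_eq, ← pow_succ]
      exact sup_le_sup_left (mul_le_left _ _) _
    · rw [sup_mul_eq, ← pow_succ]
      exact sup_le_sup_right (mul_le_left _ _) _

end ResiduatedLattice

open ResiduatedLattice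

section Filters

variable {F M : Set α}

theorem IsFilter.one_mem (hF : IsFilter F) : (1 : α) ∈ F := by
  obtain ⟨⟨p, hp⟩, -, hup⟩ := hF
  exact hup p hp 1 (le_one p)

theorem IsFilter.pow_mem (hF : IsFilter F) {x : α} (hx : x ∈ F) (n : ℕ) : x ^ n ∈ F := by
  induction n with
  | zero => simpa using hF.one_mem
  | succ n ih => rw [pow_succ]; exact hF.2.1 _ ih _ hx

/-- The filter generated by `M ∪ {x}` when `M` is a filter. -/
def filterAdjoin (M : Set α) (x : α) : Set α := {z | ∃ p ∈ M, ∃ n : ℕ, p * x ^ n ≤ z}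

theorem isFilter_filterAdjoin (hM : IsFilter M) (x : α) : IsFilter (filterAdjoin M x) := by
  obtain ⟨⟨p₀, hp₀⟩, hmul, -⟩ := hM
  refine ⟨⟨p₀, p₀, hp₀, 0, by simp⟩, ?_, ?_⟩
  · rintro z ⟨p, hp, n, hpz⟩ w ⟨q, hq, k, hqw⟩
    refine ⟨p * q, hmul p hp q hq, n + k, ?_⟩
    rw [pow_add, mul_mul_mul_comm]
    exact mul_le_mul' hpz hqw
  · rintro z ⟨p, hp, n, hpz⟩ w hzw
    exact ⟨p, hp, n, hpz.trans hzw⟩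

theorem subset_filterAdjoin (M : Set α) (x : α) : M ⊆ filterAdjoin M x :=
  fun p hp => ⟨p, hp, 0, by simp⟩

theorem mem_filterAdjoin_self (hM : IsFilter M) (x : α) : x ∈ filterAdjoin M x := by
  obtain ⟨p, hp⟩ := hM.1
  exact ⟨p, hp, 1, by simpa using mul_le_right p x⟩

theorem filterAdjoin_inter_filterAdjoin_subset (hM : IsFilter M) {x y : α}
    (hxy : x ⊔ y ∈ M) : filterAdjoin M x ∩ filterAdjoin M y ⊆ M := by
  rintro z ⟨⟨p, hp, n, hpz⟩, ⟨q, hq, m, hqz⟩⟩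
  refine hM.2.2 (p * q * (x ⊔ y) ^ (n + m)) (hM.2.1 _ (hM.2.1 _ hp _ hq) _ (hM.pow_mem hxy _)) z ?_
  calc p * q * (x ⊔ y) ^ (n + m) ≤ p * q * (x ^ n ⊔ y ^ m) :=
        mul_le_mul_right (sup_pow_add_le x y n m) _
    _ = (p * x ^ n) * q ⊔ (q * y ^ m) * p := by
        rw [mul_sup_eq, mul_right_comm p q, mul_comm p q, mul_right_comm q p]
    _ ≤ z := sup_le ((mul_le_left _ _).trans hpz) ((mul_le_left _ _).trans hqz)

theorem isFilter_sUnion_of_isChain {c : Set (Set α)} (hc : ∀ G ∈ c, IsFilter G)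
    (hchain : IsChain (· ⊆ ·) c) (hne : c.Nonempty) : IsFilter (⋃₀ c) := by
  obtain ⟨G₀, hG₀⟩ := hne
  refine ⟨⟨1, G₀, hG₀, (hc G₀ hG₀).one_mem⟩, ?_, ?_⟩
  · rintro a ⟨G₁, hG₁, ha⟩ b ⟨G₂, hG₂, hb⟩
    rcases hchain.total hG₁ hG₂ with h | h
    · exact ⟨G₂, hG₂, (hc G₂ hG₂).2.1 a (h ha) b hb⟩
    · exact ⟨G₁, hG₁, (hc G₁ hG₁).2.1 a ha b (h hb)⟩
  · rintro a ⟨G, hG, ha⟩ b hab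
    exact ⟨G, hG, (hc G hG).2.2 a ha b hab⟩

theorem isPrimeFilter_sInter_of_isChain {c : Set (Set α)} (hc : ∀ P ∈ c, IsPrimeFilter P)
    (hchain : IsChain (· ⊆ ·) c) (hne : c.Nonempty) : IsPrimeFilter (⋂₀ c) := by
  obtain ⟨P₀, hP₀⟩ := hne
  refine ⟨⟨⟨1, fun P hP => (hc P hP).1.one_mem⟩, ?_, ?_⟩, ?_, ?_⟩
  · exact fun a ha b hb P hP => (hc P hP).1.2.1 a (ha P hP) b (hb P hP)
  · exact fun a ha b hab P hP => (hc P hP).1.2.2 a (ha P hP) b hab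
  · exact fun h => (hc P₀ hP₀).2.1 (Set.eq_univ_of_univ_subset (h ▸ Set.sInter_subset_of_mem hP₀))
  · intro x y hxy
    by_contra! hcon
    simp only [Set.mem_sInter, not_forall] at hcon
    obtain ⟨⟨P₁, hP₁, hx⟩, ⟨P₂, hP₂, hy⟩⟩ := hcon
    rcases hchain.total hP₁ hP₂ with h | h
    · exact ((hc P₁ hP₁).2.2 x y (hxy P₁ hP₁)).elim hx (fun hy' => hy (h hy'))
    · exact ((hc P₂ hP₂).2.2 x y (hxy P₂ hP₂)).elim (fun hx' => hx (h hx')) hy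

theorem isPrimeFilter_of_maximal {S : Set α} (hS : IsJoinClosed S)
    (hM : Maximal (fun G => IsFilter G ∧ Disjoint G S) M) : IsPrimeFilter M := by
  obtain ⟨⟨hMf, hMS⟩, hmax⟩ := hM
  have meets : ∀ x ∉ M, ∃ s ∈ S, s ∈ filterAdjoin M x := by
    intro x hx
    by_contra! h
    exact hx (hmax ⟨isFilter_filterAdjoin hMf x, Set.disjoint_right.mpr h⟩
      (subset_filterAdjoin M x) (mem_filterAdjoin_self hMf x))
  refine ⟨hMf, fun h => ?_, fun x y hxy => ?_⟩
  · obtain ⟨s, hs⟩ := hS.1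
    exact Set.disjoint_right.mp hMS hs (h ▸ Set.mem_univ s)
  · by_contra! hxy'
    obtain ⟨s, hs, hsx⟩ := meets x hxy'.1
    obtain ⟨t, ht, hty⟩ := meets y hxy'.2
    refine Set.disjoint_right.mp hMS (hS.2 s hs t ht)
      (filterAdjoin_inter_filterAdjoin_subset hMf hxy ⟨?_, ?_⟩)
    · exact (isFilter_filterAdjoin hMf x).2.2 s hsx _ le_sup_left
    · exact (isFilter_filterAdjoin hMf y).2.2 t hty _ le_sup_right

theorem IsFilter.exists_isPrimeFilter_disjoint (hF : IsFilter F) {S : Set α} (hS : IsJoinClosed S)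
    (hFS : Disjoint F S) : ∃ P, IsPrimeFilter P ∧ F ⊆ P ∧ Disjoint P S := by
  obtain ⟨M, hFM, hM⟩ := zorn_subset_nonempty {G | IsFilter G ∧ Disjoint G S}
    (fun c hc hchain hne => ⟨⋃₀ c,
      ⟨isFilter_sUnion_of_isChain (fun G hG => (hc hG).1) hchain hne,
        Set.disjoint_sUnion_left.mpr fun G hG => (hc hG).2⟩,
      fun _ => Set.subset_sUnion_of_mem⟩) F ⟨hF, hFS⟩
  exact ⟨M, isPrimeFilter_of_maximal hS hM, hFM, hM.1.2⟩

theorem exists_isMinPrimeOver_subset {P : Set α} (hP : IsPrimeFilter P) (hFP : F ⊆ P) :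
    ∃ m, IsMinPrimeOver F m ∧ m ⊆ P := by
  obtain ⟨m, hmP, hm⟩ := zorn_superset_nonempty {Q | IsPrimeFilter Q ∧ F ⊆ Q}
    (fun c hc hchain hne => ⟨⋂₀ c,
      ⟨isPrimeFilter_sInter_of_isChain (fun Q hQ => (hc hQ).1) hchain hne,
        Set.subset_sInter fun Q hQ => (hc hQ).2⟩,
      fun _ => Set.sInter_subset_of_mem⟩) P ⟨hP, hFP⟩
  exact ⟨m, ⟨hm.1.1, hm.1.2, fun Q hQ hFQ hQm => hQm.antisymm (hm.2 ⟨hQ, hFQ⟩ hQm)⟩, hmP⟩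

end Filters

section Omega

variable {F C P : Set α}

theorem omegaF_subset_of_isPrimeFilter (hP : IsPrimeFilter P) (hFP : F ⊆ P) (hPC : P ∩ C = ∅) :
    omegaF F C ⊆ P := by
  rintro a ⟨x, hxC, hxa⟩
  refine (hP.2.2 x a (hFP hxa)).resolve_left fun hxP => ?_
  exact (Set.eq_empty_iff_forall_notMem.mp hPC) x ⟨hxP, hxC⟩

theorem exists_isMinPrimeOver_notMem_of_notMem_omegaF (hF : IsFilter F) (hC : IsJoinClosed C)
    {a : α} (ha : a ∉ omegaF F C) : ∃ m, IsMinPrimeOver F m ∧ m ∩ C = ∅ ∧ a ∉ m := by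
  set S := (· ⊔ a) '' C
  have hS : IsJoinClosed S := by
    refine ⟨hC.1.image _, ?_⟩
    rintro _ ⟨x, hx, rfl⟩ _ ⟨y, hy, rfl⟩
    exact ⟨x ⊔ y, hC.2 x hx y hy, sup_sup_distrib_right x y a⟩
  have hFS : Disjoint F S := by
    rw [Set.disjoint_right]
    rintro _ ⟨x, hx, rfl⟩ hxa
    exact ha ⟨x, hx, hxa⟩
  obtain ⟨P, hP, hFP, hPS⟩ := hF.exists_isPrimeFilter_disjoint hS hFS
  have hup := hP.1.2.2
  obtain ⟨m, hm, hmP⟩ := exists_isMinPrimeOver_subset hP hFP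
  refine ⟨m, hm, Set.eq_empty_iff_forall_notMem.mpr ?_, fun ham => ?_⟩
  · rintro x ⟨hxm, hxC⟩
    exact Set.disjoint_left.mp hPS (hup x (hmP hxm) _ le_sup_left) ⟨x, hxC, rfl⟩
  · obtain ⟨c, hc⟩ := hC.1
    exact Set.disjoint_left.mp hPS (hup a (hmP ham) _ le_sup_right) ⟨c, hc, rfl⟩

end Omega

/-- Corollary 3.20: `ω_F(C)` is the intersection of the `F`-minimal prime
filters disjoint from `C`. -/
theorem stmt_13 (F C : Set α) (hF : IsFilter F) (hC : IsJoinClosed C) :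
    omegaF F C = ⋂₀ {m : Set α | IsMinPrimeOver F m ∧ m ∩ C = ∅} := by
  refine subset_antisymm (fun a ha => Set.mem_sInter.mpr fun m hm =>
    omegaF_subset_of_isPrimeFilter hm.1.1 hm.1.2.1 hm.2 ha) fun a ha => ?_
  by_contra ha'
  obtain ⟨m, hm, hmC, ham⟩ := exists_isMinPrimeOver_notMem_of_notMem_omegaF hF hC ha'
  exact ham (Set.mem_sInter.mp ha m ⟨hm, hmC⟩)
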